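/- Let G = (V, E) be a connected graph with a linear order < on E. Then the generating function for connected spanning subgraphs, S(G, y) = Σ_{A ⊆ E, (V,A) connected} y^{|A|}, satisfies S(G, y) = y^{|V|−1} Σ_{T spanning tree of G} (1 + y)^{e(T)}, where e(T) is the number of externally active edges of T. -/

import Mathlib

open Finset

attribute [local instance] Classical.propDecidable

/-- A multigraph on vertex type `V` with edge index type `E` is given by a map
`ends : E → Sym2 V` (loops and parallel edges are allowed).  For an edge subset
`A ⊆ E`, `edgeGraph ends A` is the simple graph on `V` whose adjacency is
witnessed by some edge of `A`; it determines the connected components of the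
spanning subgraph `(V, A)`. -/
def edgeGraph {V E : Type} (ends : E → Sym2 V) (A : Finset E) : SimpleGraph V where
  Adj a b := a ≠ b ∧ ∃ e ∈ A, ends e = s(a, b)
  symm := ⟨by
    rintro a b ⟨hab, e, he, hs⟩
    exact ⟨Ne.symm hab, e, he, by rw [hs, Sym2.eq_swap]⟩⟩
  loopless := ⟨by rintro a ⟨h, -⟩; exact h rfl⟩

/-- `kc ends A` is the number of connected components of the spanning subgraph `(V, A)`. -/
noncomputable def kc {V E : Type} (ends : E → Sym2 V) (A : Finset E) : ℕ :=
  Nat.card (edgeGraph ends A).ConnectedComponent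

/-- `(V, A)` is a spanning forest of `(V, E)`: it is a forest
(`|A| + k((V,A)) = |V|`, which rules out loops, parallel edges and cycles)
with as many connected components as the whole graph. -/
def IsSpanningForest {V E : Type} [Fintype V] [Fintype E] (ends : E → Sym2 V)
    (A : Finset E) : Prop :=
  A.card + kc ends A = Fintype.card V ∧ kc ends A = kc ends Finset.univ

/-- `F - e + f`. -/
def swapEdge {E : Type} [DecidableEq E] (A : Finset E) (e f : E) : Finset E :=
  insert f (A.erase e)

/-- `e` is internally active in the spanning forest `(V, A)`. -/
def InternallyActive {V E : Type} [Fintype V] [Fintype E] [DecidableEq E] [LinearOrder E]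
    (ends : E → Sym2 V) (A : Finset E) (e : E) : Prop :=
  e ∈ A ∧ ¬ ∃ f, f ∉ A ∧ e < f ∧ IsSpanningForest ends (swapEdge A e f)

/-- `f` is externally active in the spanning forest `(V, A)`. -/
def ExternallyActive {V E : Type} [Fintype V] [Fintype E] [DecidableEq E] [LinearOrder E]
    (ends : E → Sym2 V) (A : Finset E) (f : E) : Prop :=
  f ∉ A ∧ ¬ ∃ e, e ∈ A ∧ f < e ∧ IsSpanningForest ends (swapEdge A e f)

/-- The set `E_i(F)` of internally active edges of the spanning forest `F = (V, A)`. -/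
noncomputable def intAct {V E : Type} [Fintype V] [Fintype E] [DecidableEq E] [LinearOrder E]
    (ends : E → Sym2 V) (A : Finset E) : Finset E :=
  Finset.univ.filter (InternallyActive ends A)

/-- The set `E_e(F)` of externally active edges of the spanning forest `F = (V, A)`. -/
noncomputable def extAct {V E : Type} [Fintype V] [Fintype E] [DecidableEq E] [LinearOrder E]
    (ends : E → Sym2 V) (A : Finset E) : Finset E :=
  Finset.univ.filter (ExternallyActive ends A)

/-!
Let `kruskal A` be the greedy spanning forest of `(V, A)`: scanning `A` in increasing order,
keep an edge unless its endpoints are already joined by the smaller edges of `A`. An edge of a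
spanning forest `T` is externally active exactly when its endpoints are joined by the edges of
`T` smaller than it, and this is precisely what makes `kruskal` discard it. Hence
`A ↦ (kruskal A, A \ kruskal A)` is a bijection from the connected spanning subgraphs onto the
pairs `(T, S)` of a spanning tree `T` and a set `S` of externally active edges of `T`, with
inverse `(T, S) ↦ T ∪ S`. Since `|T| = |V| - 1`, summing `y ^ (|T| + |S|)` over `S` gives
`y ^ (|V| - 1) * (1 + y) ^ e(T)`.
-/

open SimpleGraph

variable {V E : Type} {ends : E → Sym2 V}

/-- `e` lies in the closure of `A` in the cycle matroid. -/
def Spans (ends : E → Sym2 V) (A : Finset E) (e : E) : Prop :=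
  ∀ a b, ends e = s(a, b) → (edgeGraph ends A).Reachable a b

lemma edgeGraph_mono {A B : Finset E} (h : A ⊆ B) : edgeGraph ends A ≤ edgeGraph ends B :=
  fun _ _ ⟨hab, e, he, hs⟩ => ⟨hab, e, h he, hs⟩

lemma spans_of_mem {A : Finset E} {e : E} (he : e ∈ A) : Spans ends A e := by
  intro a b hs
  by_cases hab : a = b
  · exact hab ▸ Reachable.refl a
  · exact Adj.reachable ⟨hab, e, he, hs⟩

lemma Spans.mono {A B : Finset E} {e : E} (h : Spans ends A e) (hAB : A ⊆ B) :
    Spans ends B e :=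
  fun a b hs => (h a b hs).mono (edgeGraph_mono hAB)

lemma reachable_of_forall_spans {A B : Finset E} (h : ∀ e ∈ A, Spans ends B e) {u v : V}
    (huv : (edgeGraph ends A).Reachable u v) : (edgeGraph ends B).Reachable u v := by
  obtain ⟨p⟩ := huv
  induction p with
  | nil => rfl
  | cons hadj _ ih =>
    obtain ⟨-, e, he, hs⟩ := hadj
    exact (h e he _ _ hs).trans ih

lemma Spans.of_forall_spans {A B : Finset E} {f : E} (hf : Spans ends A f)
    (h : ∀ e ∈ A, Spans ends B e) : Spans ends B f :=
  fun a b hs => reachable_of_forall_spans h (hf a b hs)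

lemma reachable_or_exists_of_reachable_insert [DecidableEq E] {A : Finset E} {e : E} {u v : V}
    (h : (edgeGraph ends (insert e A)).Reachable u v) :
    (edgeGraph ends A).Reachable u v ∨ ∃ a b, ends e = s(a, b) ∧
      (edgeGraph ends A).Reachable u a ∧ (edgeGraph ends A).Reachable b v := by
  obtain ⟨p⟩ := h
  induction p with
  | nil => exact Or.inl (Reachable.refl _)
  | @cons u x v hadj _ ih =>
    obtain ⟨hux, f, hf, hsf⟩ := hadj
    rcases mem_insert.1 hf with rfl | hf
    · rcases ih with hxv | ⟨a, b, hs, hxa, hbv⟩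
      · exact Or.inr ⟨u, x, hsf, Reachable.refl u, hxv⟩
      · rcases Sym2.eq_iff.1 (hsf.symm.trans hs) with ⟨rfl, -⟩ | ⟨rfl, rfl⟩
        · exact Or.inr ⟨u, b, hs, Reachable.refl u, hbv⟩
        · exact Or.inl hbv
    · have hux : (edgeGraph ends A).Reachable u x := Adj.reachable ⟨hux, f, hf, hsf⟩
      rcases ih with hxv | ⟨a, b, hs, hxa, hbv⟩
      · exact Or.inl (hux.trans hxv)
      · exact Or.inr ⟨a, b, hs, hux.trans hxa, hbv⟩

lemma Spans.exchange [DecidableEq E] {C : Finset E} {e f : E} (h : Spans ends (insert e C) f)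
    (hC : ¬Spans ends C f) : Spans ends (insert f C) e := by
  simp only [Spans, not_forall] at hC
  obtain ⟨a, b, hf, hab⟩ := hC
  rcases reachable_or_exists_of_reachable_insert (h a b hf) with hab' | ⟨c, d, he, hac, hdb⟩
  · exact absurd hab' hab
  have hle := edgeGraph_mono (ends := ends) (subset_insert f C)
  have hcd : (edgeGraph ends (insert f C)).Reachable c d :=
    ((hac.symm.mono hle).trans (spans_of_mem (mem_insert_self f C) a b hf)).trans
      (hdb.symm.mono hle)
  intro c' d' he'
  rcases Sym2.eq_iff.1 (he.symm.trans he') with ⟨rfl, rfl⟩ | ⟨rfl, rfl⟩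
  · exact hcd
  · exact hcd.symm

lemma kc_eq_iff_forall_spans [Finite V] {A B : Finset E} (h : A ⊆ B) :
    kc ends B = kc ends A ↔ ∀ e ∈ B, Spans ends A e := by
  have hφ := ConnectedComponent.surjective_map_ofLE (edgeGraph_mono (ends := ends) h)
  constructor
  · intro hk e he a b hs
    have hinj := (hφ.bijective_of_nat_card_le hk.ge).1
    exact ConnectedComponent.exact (hinj (ConnectedComponent.sound (spans_of_mem he a b hs)))
  · intro hspans
    refine (Nat.card_eq_of_bijective _ ⟨?_, hφ⟩).symm
    intro c₁ c₂
    induction c₁ using ConnectedComponent.ind with | _ u =>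
    induction c₂ using ConnectedComponent.ind with | _ v =>
    intro huv
    exact ConnectedComponent.sound (reachable_of_forall_spans hspans (ConnectedComponent.exact huv))

lemma kc_insert_of_spans [Finite V] [DecidableEq E] {A : Finset E} {e : E}
    (h : Spans ends A e) : kc ends (insert e A) = kc ends A :=
  (kc_eq_iff_forall_spans (subset_insert e A)).2 fun f hf => by
    rcases mem_insert.1 hf with rfl | hf
    exacts [h, spans_of_mem hf]

/-- The components of `(V, A + e)` are the images of the components of `(V, A)` other than that
of one endpoint of `e`. -/
lemma kc_insert_add_one [Finite V] [DecidableEq E] {A : Finset E} {e : E}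
    (h : ¬Spans ends A e) : kc ends (insert e A) + 1 = kc ends A := by
  simp only [Spans, not_forall] at h
  obtain ⟨a, b, hs, hab⟩ := h
  set G := edgeGraph ends A
  set G' := edgeGraph ends (insert e A)
  have hle : G ≤ G' := edgeGraph_mono (subset_insert e A)
  let φ : {c : G.ConnectedComponent // c ≠ G.connectedComponentMk a} → G'.ConnectedComponent :=
    fun c => c.1.map (Hom.ofLE hle)
  have hφ : Function.Bijective φ := by
    constructor
    · rintro ⟨c₁, hc₁⟩ ⟨c₂, hc₂⟩ hc
      induction c₁ using ConnectedComponent.ind with | _ u =>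
      induction c₂ using ConnectedComponent.ind with | _ v =>
      simp only [Subtype.mk.injEq]
      rcases reachable_or_exists_of_reachable_insert (ConnectedComponent.exact hc) with
        huv | ⟨a', b', hs', hua, hbv⟩
      · exact ConnectedComponent.sound huv
      rcases Sym2.eq_iff.1 (hs.symm.trans hs') with ⟨rfl, -⟩ | ⟨ha, -⟩
      · exact absurd (ConnectedComponent.sound hua) hc₁
      · rw [← ha] at hbv
        exact absurd (ConnectedComponent.sound hbv.symm) hc₂
    · intro c
      induction c using ConnectedComponent.ind with | _ v =>
      by_cases hv : G.connectedComponentMk v = G.connectedComponentMk a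
      · refine ⟨⟨G.connectedComponentMk b, fun hb => hab (ConnectedComponent.exact hb.symm)⟩,
          ?_⟩
        have hab' : G'.Reachable a b := spans_of_mem (mem_insert_self e A) a b hs
        have hva : G'.Reachable v a := (ConnectedComponent.exact hv).mono hle
        exact ConnectedComponent.sound (hva.trans hab').symm
      · exact ⟨⟨_, hv⟩, rfl⟩
  rw [kc, kc, ← Nat.card_eq_of_bijective φ hφ, ← Finite.card_option,
    Nat.card_congr (Equiv.optionSubtypeNe _)]

lemma kc_empty [Fintype V] : kc ends (∅ : Finset E) = Fintype.card V := by
  rw [kc, ← Nat.card_eq_fintype_card]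
  refine (Nat.card_eq_of_bijective (edgeGraph ends ∅).connectedComponentMk
    ⟨fun u v huv => ?_, ConnectedComponent.ind fun v => ⟨v, rfl⟩⟩).symm
  obtain ⟨p⟩ := ConnectedComponent.exact huv
  cases p with
  | nil => rfl
  | cons hadj _ => obtain ⟨-, e, he, -⟩ := hadj; exact absurd he (notMem_empty e)

lemma card_le_card_add_kc [Fintype V] (A : Finset E) :
    Fintype.card V ≤ #A + kc ends A := by
  induction A using Finset.induction_on with
  | empty => rw [kc_empty, card_empty, zero_add]
  | @insert e A he ih =>
    rw [card_insert_of_notMem he]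
    by_cases h : Spans ends A e
    · rw [kc_insert_of_spans h]; omega
    · have := kc_insert_add_one h; omega

def IsForest [Fintype V] (ends : E → Sym2 V) (A : Finset E) : Prop :=
  #A + kc ends A = Fintype.card V

section Forest

variable [Fintype V] [DecidableEq E] {T : Finset E}

lemma IsForest.insert_of_not_spans {e : E} (hT : IsForest ends T) (h : ¬Spans ends T e) :
    IsForest ends (insert e T) := by
  have he : e ∉ T := fun he => h (spans_of_mem he)
  have := kc_insert_add_one h
  unfold IsForest at hT ⊢
  rw [card_insert_of_notMem he]
  omega

lemma IsForest.not_spans_erase {e : E} (hT : IsForest ends T) (he : e ∈ T) :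
    ¬Spans ends (T.erase e) e := by
  intro h
  have hkc := kc_insert_of_spans h
  rw [insert_erase he] at hkc
  have := card_le_card_add_kc (ends := ends) (T.erase e)
  have := card_erase_add_one he
  unfold IsForest at hT
  omega

lemma IsForest.kc_erase {e : E} (hT : IsForest ends T) (he : e ∈ T) :
    kc ends (T.erase e) = kc ends T + 1 := by
  have := kc_insert_add_one (hT.not_spans_erase he)
  rw [insert_erase he] at this
  omega

/-- If `f` is spanned by the forest `T` but not by `B ⊆ T`, then some edge of `T \ B` lies on the
cycle that `f` closes in `T`. -/
lemma IsForest.exists_not_spans_erase {B : Finset E} {f : E} (hT : IsForest ends T)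
    (hBT : B ⊆ T) (hB : ¬Spans ends B f) (hTf : Spans ends T f) :
    ∃ e ∈ T, e ∉ B ∧ ¬Spans ends (T.erase e) f := by
  -- Any `e ∈ T \ C`, for `C ⊇ B` maximal in `T` not spanning `f`, works by exchange.
  let 𝒞 := T.powerset.filter fun C => B ⊆ C ∧ ¬Spans ends C f
  have hB𝒞 : B ∈ 𝒞 := mem_filter.2 ⟨mem_powerset.2 hBT, subset_rfl, hB⟩
  obtain ⟨C, hC, hCmax⟩ := 𝒞.exists_max_image card ⟨B, hB𝒞⟩
  obtain ⟨hCT, hBC, hCf⟩ : C ⊆ T ∧ B ⊆ C ∧ ¬Spans ends C f := by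
    simpa only [𝒞, mem_filter, mem_powerset] using hC
  obtain ⟨e, heT, heC⟩ : ∃ e ∈ T, e ∉ C := not_subset.1 fun hTC => hCf (hTf.mono hTC)
  refine ⟨e, heT, fun heB => heC (hBC heB), fun hf => ?_⟩
  have hCe : Spans ends (insert e C) f := by
    by_contra h
    have := hCmax (insert e C) (mem_filter.2
      ⟨mem_powerset.2 (insert_subset heT hCT), hBC.trans (subset_insert e C), h⟩)
    rw [card_insert_of_notMem heC] at this
    omega
  refine hT.not_spans_erase heT ((hCe.exchange hCf).of_forall_spans fun g hg => ?_)
  rcases mem_insert.1 hg with rfl | hg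
  · exact hf
  · exact spans_of_mem (mem_erase.2 ⟨fun h => heC (h ▸ hg), hCT hg⟩)

end Forest

section SpanningForest

variable [Fintype V] [Fintype E] {T : Finset E}

lemma IsSpanningForest.isForest (hT : IsSpanningForest ends T) : IsForest ends T := hT.1

lemma IsSpanningForest.spans (hT : IsSpanningForest ends T) (f : E) : Spans ends T f :=
  (kc_eq_iff_forall_spans (subset_univ T)).1 hT.2.symm f (mem_univ f)

lemma IsSpanningForest.card_eq (hT : IsSpanningForest ends T) :
    #T = Fintype.card V - kc ends univ := by
  have := hT.1
  have := hT.2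
  omega

lemma IsSpanningForest.swapEdge_iff [DecidableEq E] {e f : E} (hT : IsSpanningForest ends T)
    (he : e ∈ T) (hf : f ∉ T) :
    IsSpanningForest ends (swapEdge T e f) ↔ ¬Spans ends (T.erase e) f := by
  have hcard : #(swapEdge T e f) = #T := by
    rw [swapEdge, card_insert_of_notMem fun h => hf (mem_of_mem_erase h), card_erase_add_one he]
  have hkc := hT.isForest.kc_erase he
  obtain ⟨hforest, hspanning⟩ := hT
  unfold IsSpanningForest
  constructor
  · intro ⟨_, hk⟩ hs
    rw [swapEdge, kc_insert_of_spans hs] at hk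
    omega
  · intro hs
    have := kc_insert_add_one hs
    rw [← swapEdge] at this
    refine ⟨?_, ?_⟩ <;> omega

lemma IsSpanningForest.externallyActive_iff [DecidableEq E] [LinearOrder E] {f : E}
    (hT : IsSpanningForest ends T) :
    ExternallyActive ends T f ↔ f ∉ T ∧ Spans ends (T.filter (· < f)) f := by
  unfold ExternallyActive
  refine and_congr_right fun hf => ⟨fun h => ?_, ?_⟩
  · by_contra hs
    obtain ⟨e, heT, heB, he⟩ :=
      hT.isForest.exists_not_spans_erase (filter_subset _ T) hs (hT.spans f)
    have hfe : f < e := lt_of_le_of_ne (not_lt.1 fun h => heB (mem_filter.2 ⟨heT, h⟩))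
      (ne_of_mem_of_not_mem heT hf).symm
    exact h ⟨e, heT, hfe, (hT.swapEdge_iff heT hf).2 he⟩
  · rintro hs ⟨e, heT, hfe, hswap⟩
    refine (hT.swapEdge_iff heT hf).1 hswap (hs.mono fun g hg => ?_)
    rw [mem_filter] at hg
    exact mem_erase.2 ⟨(hg.2.trans hfe).ne, hg.1⟩

end SpanningForest

section Kruskal

variable [LinearOrder E] {A : Finset E}

noncomputable def kruskal (ends : E → Sym2 V) (A : Finset E) : Finset E :=
  A.filter fun e => ¬Spans ends (A.filter (· < e)) e

lemma mem_kruskal {e : E} :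
    e ∈ kruskal ends A ↔ e ∈ A ∧ ¬Spans ends (A.filter (· < e)) e :=
  mem_filter

lemma kruskal_subset : kruskal ends A ⊆ A := filter_subset _ _

lemma spans_kruskal_filter_lt [Finite E] {e : E} (he : e ∈ A) (hek : e ∉ kruskal ends A) :
    Spans ends ((kruskal ends A).filter (· < e)) e := by
  induction e using WellFoundedLT.induction with | _ e ih =>
  have hspans : Spans ends (A.filter (· < e)) e := by
    by_contra h
    exact hek (mem_kruskal.2 ⟨he, h⟩)
  refine hspans.of_forall_spans fun g hg => ?_
  rw [mem_filter] at hg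
  by_cases hgk : g ∈ kruskal ends A
  · exact spans_of_mem (mem_filter.2 ⟨hgk, hg.2⟩)
  · refine (ih g hg.2 hg.1 hgk).mono fun x hx => ?_
    rw [mem_filter] at hx ⊢
    exact ⟨hx.1, hx.2.trans hg.2⟩

lemma spans_kruskal [Finite E] {e : E} (he : e ∈ A) : Spans ends (kruskal ends A) e := by
  by_cases hek : e ∈ kruskal ends A
  · exact spans_of_mem hek
  · exact (spans_kruskal_filter_lt he hek).mono (filter_subset _ _)

lemma kc_kruskal [Finite V] [Finite E] : kc ends (kruskal ends A) = kc ends A :=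
  ((kc_eq_iff_forall_spans kruskal_subset).2 fun _ => spans_kruskal).symm

lemma isForest_kruskal [Fintype V] : IsForest ends (kruskal ends A) := by
  suffices ∀ F ⊆ kruskal ends A, IsForest ends F from this _ subset_rfl
  intro F
  induction F using Finset.induction_on_max with
  | empty => intro _; rw [IsForest, card_empty, kc_empty, zero_add]
  | insert a F hlt ih =>
    intro hF
    have hFA : F ⊆ A.filter (· < a) := fun x hx =>
      mem_filter.2 ⟨kruskal_subset (hF (mem_insert_of_mem hx)), hlt x hx⟩
    have ha := (mem_kruskal.1 (hF (mem_insert_self a F))).2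
    exact (ih ((subset_insert a F).trans hF)).insert_of_not_spans fun h => ha (h.mono hFA)

lemma isSpanningForest_kruskal [Fintype V] [Fintype E] (hA : kc ends A = kc ends univ) :
    IsSpanningForest ends (kruskal ends A) :=
  ⟨isForest_kruskal, kc_kruskal.trans hA⟩

lemma kruskal_union [Fintype V] [DecidableEq E] {T S : Finset E} (hT : IsForest ends T)
    (hS : ∀ f ∈ S, Spans ends (T.filter (· < f)) f) : kruskal ends (T ∪ S) = T := by
  ext e
  rw [mem_kruskal, mem_union]
  constructor
  · rintro ⟨heT | heS, he⟩
    · exact heT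
    · exact absurd ((hS e heS).mono (filter_subset_filter _ subset_union_left)) he
  · refine fun heT => ⟨Or.inl heT, fun he => hT.not_spans_erase heT ?_⟩
    refine he.of_forall_spans fun g hg => ?_
    rw [mem_filter, mem_union] at hg
    obtain ⟨hgT | hgS, hge⟩ := hg
    · exact spans_of_mem (mem_erase.2 ⟨hge.ne, hgT⟩)
    · refine (hS g hgS).mono fun x hx => ?_
      rw [mem_filter] at hx
      exact mem_erase.2 ⟨(hx.2.trans hge).ne, hx.1⟩

lemma sdiff_kruskal_subset_extAct [Fintype V] [Fintype E] [DecidableEq E]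
    (hA : kc ends A = kc ends univ) : A \ kruskal ends A ⊆ extAct ends (kruskal ends A) := by
  intro f hf
  rw [mem_sdiff] at hf
  rw [extAct, mem_filter, (isSpanningForest_kruskal hA).externallyActive_iff]
  exact ⟨mem_univ f, hf.2, spans_kruskal_filter_lt hf.1 hf.2⟩

end Kruskal

theorem sum_pow_card_eq_sum_pow_card_extAct {R : Type*} [CommSemiring R] [Fintype V] [Fintype E]
    [DecidableEq E] [LinearOrder E] (ends : E → Sym2 V) (y : R) :
    ∑ A ∈ univ.powerset.filter (fun A => kc ends A = kc ends univ), y ^ #A =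
      y ^ (Fintype.card V - kc ends univ) *
        ∑ T ∈ univ.powerset.filter (IsSpanningForest ends), (1 + y) ^ #(extAct ends T) := by
  let forests := univ.powerset.filter (IsSpanningForest ends)
  calc _ = ∑ p ∈ forests.sigma fun T => (extAct ends T).powerset, y ^ (#p.1 + #p.2) := by
        refine sum_nbij' (fun A => ⟨kruskal ends A, A \ kruskal ends A⟩) (fun p => p.1 ∪ p.2)
          ?_ ?_ ?_ ?_ ?_
        · intro A hA
          have hA := (mem_filter.1 hA).2
          simp only [forests, mem_sigma, mem_filter, mem_powerset, subset_univ, true_and]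
          exact ⟨isSpanningForest_kruskal hA, sdiff_kruskal_subset_extAct hA⟩
        · rintro ⟨T, S⟩ hp
          simp only [forests, mem_sigma, mem_filter, mem_powerset, subset_univ, true_and] at hp ⊢
          rw [(kc_eq_iff_forall_spans subset_union_left).2 fun e _ => hp.1.spans e, hp.1.2]
        · intro A _
          exact union_sdiff_of_subset kruskal_subset
        · rintro ⟨T, S⟩ hp
          simp only [forests, mem_sigma, mem_filter, mem_powerset, subset_univ, true_and] at hp
          obtain ⟨hT, hS⟩ := hp
          have hS' : ∀ f ∈ S, ExternallyActive ends T f := fun f hf => (mem_filter.1 (hS hf)).2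
          rw [kruskal_union hT.isForest fun f hf => (hT.externallyActive_iff.1 (hS' f hf)).2,
            union_sdiff_cancel_left (disjoint_right.2 fun f hf => (hS' f hf).1)]
        · intro A _
          dsimp only
          rw [add_comm, card_sdiff_add_card_eq_card kruskal_subset]
    _ = _ := by
        rw [sum_sigma, mul_sum]
        refine sum_congr rfl fun T hT => ?_
        dsimp only
        rw [(mem_filter.1 hT).2.card_eq, add_comm 1 y, ← sum_pow_mul_eq_add_pow y 1, mul_sum]
        refine sum_congr rfl fun S _ => ?_
        rw [one_pow, mul_one, pow_add]

/-- For a connected graph, the generating function of connected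
spanning subgraphs satisfies `S(G, y) = y^{|V|−1} ∑_{T spanning tree} (1 + y)^{e(T)}`. -/
theorem connected_spanning_subgraphs_gen_fun {V E : Type} [Fintype V] [Fintype E]
    [DecidableEq E] [LinearOrder E] (ends : E → Sym2 V)
    (hconn : kc ends (Finset.univ : Finset E) = 1) (y : ℝ) :
    ∑ A ∈ Finset.univ.powerset.filter (fun A => kc ends A = 1), y ^ A.card =
      y ^ (Fintype.card V - 1) *
        ∑ T ∈ Finset.univ.powerset.filter (IsSpanningForest ends),
          (1 + y) ^ (extAct ends T).card := by
  simpa only [hconn] using sum_pow_card_eq_sum_pow_card_extAct ends y
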